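/- arXiv:math/0202209 — 7 statements merged into one kernel-verified Lean document; each statement's English description precedes it below -/
import Mathlib

section
/- The bracket on R^3 given by [X1,X2] = -a X2 + n3 X3, [X2,X3] = n1 X1, [X3,X1] = n2 X2 + a X3 satisfies the Jacobi identity if and only if a·n1 = 0. -/
/-- The skew-symmetric bilinear bracket on `ℝ³` determined by
`[e0,e1] = B01`, `[e1,e2] = B12`, `[e2,e0] = B20`. -/
def bracketOf (B01 B12 B20 : Fin 3 → ℝ) (x y : Fin 3 → ℝ) : Fin 3 → ℝ :=
  (x 0 * y 1 - x 1 * y 0) • B01 + (x 1 * y 2 - x 2 * y 1) • B12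
    + (x 2 * y 0 - x 0 * y 2) • B20

/-- The Jacobi identity for a bracket on `ℝ³`. -/
def IsJacobi (br : (Fin 3 → ℝ) → (Fin 3 → ℝ) → (Fin 3 → ℝ)) : Prop :=
  ∀ x y z, br x (br y z) + br y (br z x) + br z (br x y) = 0

/-- the bracket `[X1,X2] = -a X2 + n3 X3, [X2,X3] = n1 X1,
[X3,X1] = n2 X2 + a X3` satisfies the Jacobi identity iff `a * n1 = 0`. -/
theorem bianchi_jacobi_iff (a n1 n2 n3 : ℝ) :
    IsJacobi (bracketOf ![0, -a, n3] ![n1, 0, 0] ![0, n2, a]) ↔ a * n1 = 0 := by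
  constructor
  · intro h
    have h0 := congrFun (h ![1,0,0] ![0,1,0] ![0,0,1]) 0
    simp [bracketOf] at h0
    rcases h0 with h0 | h0 <;> simp [h0]
  · intro h x y z
    funext i
    fin_cases i <;>
      simp [bracketOf, Fin.mk_zero, Fin.mk_one, Matrix.cons_val_two, Matrix.tail_cons,
        show (⟨2, by norm_num⟩ : Fin 3) = 2 from rfl]
    · linear_combination (2*(x 2 * y 0 * z 1 - x 2 * y 1 * z 0 + x 1 * y 2 * z 0
        - x 1 * y 0 * z 2 + x 0 * y 1 * z 2 - x 0 * y 2 * z 1)) * h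
    · ring
    · ring
end

section
/- If α, β, γ ∈ R are not all zero, then the Lie algebra with brackets [Y1,Y2] = α Y1 + β Y2, [Y2,Y3] = γ Y2 − α Y3, [Y3,Y1] = −γ Y1 − β Y3 is isomorphic to the Bianchi V algebra with brackets [Z1,Z2] = −b Z2, [Z2,Z3] = 0, [Z3,Z1] = b Z3 where b = sqrt(α² + β² + γ²). -/
lemma source_bracket (α β γ : ℝ) (x y : Fin 3 → ℝ) :
    bracketOf ![α, β, 0] ![0, γ, -α] ![-γ, 0, -β] x y =
      (β * x 0 - α * x 1 - γ * x 2) • y - (β * y 0 - α * y 1 - γ * y 2) • x := by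
  funext i
  fin_cases i <;> simp [bracketOf] <;> ring

lemma target_bracket (b : ℝ) (x y : Fin 3 → ℝ) :
    bracketOf ![0, -b, 0] ![0, 0, 0] ![0, 0, b] x y =
      (-b * x 0) • y - (-b * y 0) • x := by
  funext i
  fin_cases i <;> simp [bracketOf] <;> ring

lemma helper (α β γ b : ℝ) (hb : b ≠ 0) (A : (Fin 3 → ℝ) ≃ₗ[ℝ] (Fin 3 → ℝ))
    (hA : ∀ z, A z 0 = (-β * z 0 + α * z 1 + γ * z 2) / b) :
    ∀ x y, A (bracketOf ![α, β, 0] ![0, γ, -α] ![-γ, 0, -β] x y) =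
      bracketOf ![0, -b, 0] ![0, 0, 0] ![0, 0, b] (A x) (A y) := by
  intro x y
  rw [source_bracket, target_bracket, map_sub, map_smul, map_smul, hA, hA]
  have h1 : -b * ((-β * x 0 + α * x 1 + γ * x 2) / b) = β * x 0 - α * x 1 - γ * x 2 := by
    field_simp; ring
  have h2 : -b * ((-β * y 0 + α * y 1 + γ * y 2) / b) = β * y 0 - α * y 1 - γ * y 2 := by
    field_simp; ring
  rw [h1, h2]

/-- Build a linear auto-equivalence of `ℝ³` from a matrix with explicit two-sided inverse. -/
noncomputable def eqOf (M N : Matrix (Fin 3) (Fin 3) ℝ) (h1 : M * N = 1) (h2 : N * M = 1) :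
    (Fin 3 → ℝ) ≃ₗ[ℝ] (Fin 3 → ℝ) :=
  LinearEquiv.ofLinear (Matrix.toLin' M) (Matrix.toLin' N)
    (by rw [← Matrix.toLin'_mul, h1, Matrix.toLin'_one])
    (by rw [← Matrix.toLin'_mul, h2, Matrix.toLin'_one])

lemma eqOf_apply (M N : Matrix (Fin 3) (Fin 3) ℝ) (h1 : M * N = 1) (h2 : N * M = 1)
    (z : Fin 3 → ℝ) : eqOf M N h1 h2 z = M.mulVec z := by
  simp [eqOf, Matrix.toLin'_apply]

set_option maxHeartbeats 1000000 in
/-- if (α,β,γ) ≠ 0, the algebra `[Y1,Y2] = α Y1 + β Y2`,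
`[Y2,Y3] = γ Y2 - α Y3`, `[Y3,Y1] = -γ Y1 - β Y3` is isomorphic to Bianchi V
rescaled by `b = √(α² + β² + γ²)`:
`[Z1,Z2] = -b Z2, [Z2,Z3] = 0, [Z3,Z1] = b Z3`. -/
theorem dual_IX_iso_V (α β γ : ℝ) (h : ¬(α = 0 ∧ β = 0 ∧ γ = 0)) :
    ∃ A : (Fin 3 → ℝ) ≃ₗ[ℝ] (Fin 3 → ℝ),
      ∀ x y, A (bracketOf ![α, β, 0] ![0, γ, -α] ![-γ, 0, -β] x y) =
        bracketOf ![0, -Real.sqrt (α ^ 2 + β ^ 2 + γ ^ 2), 0] ![0, 0, 0]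
          ![0, 0, Real.sqrt (α ^ 2 + β ^ 2 + γ ^ 2)] (A x) (A y) := by
  set b := Real.sqrt (α ^ 2 + β ^ 2 + γ ^ 2) with hbdef
  have hpos : 0 < α ^ 2 + β ^ 2 + γ ^ 2 := by
    rcases not_and_or.mp h with hα | h'
    · positivity
    rcases not_and_or.mp h' with hβ | hγ
    · positivity
    · positivity
  have hb : b ≠ 0 := by
    rw [hbdef]
    exact ne_of_gt (Real.sqrt_pos.mpr hpos)
  by_cases hα : α ≠ 0
  · have p1 : (!![-β/b, α/b, γ/b; 1, 0, 0; 0, 0, 1] : Matrix (Fin 3) (Fin 3) ℝ) *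
        !![0, 1, 0; b/α, β/α, -γ/α; 0, 0, 1] = 1 := by
      ext i j
      fin_cases i <;> fin_cases j <;>
        simp [Matrix.mul_apply, Fin.sum_univ_three, Matrix.one_apply, Matrix.vecHead, Matrix.vecTail] <;> (try field_simp) <;> (try ring)
    have p2 : (!![0, 1, 0; b/α, β/α, -γ/α; 0, 0, 1] : Matrix (Fin 3) (Fin 3) ℝ) *
        !![-β/b, α/b, γ/b; 1, 0, 0; 0, 0, 1] = 1 := by
      ext i j
      fin_cases i <;> fin_cases j <;>
        simp [Matrix.mul_apply, Fin.sum_univ_three, Matrix.one_apply, Matrix.vecHead, Matrix.vecTail] <;> (try field_simp) <;> (try ring)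
    refine ⟨eqOf _ _ p1 p2, helper α β γ b hb _ ?_⟩
    intro z
    rw [eqOf_apply]
    simp [Matrix.mulVec, dotProduct, Fin.sum_univ_three]
    ring
  · by_cases hβ : β ≠ 0
    · have p1 : (!![-β/b, α/b, γ/b; 0, 1, 0; 0, 0, 1] : Matrix (Fin 3) (Fin 3) ℝ) *
          !![-b/β, α/β, γ/β; 0, 1, 0; 0, 0, 1] = 1 := by
        ext i j
        fin_cases i <;> fin_cases j <;>
          simp [Matrix.mul_apply, Fin.sum_univ_three, Matrix.one_apply, Matrix.vecHead, Matrix.vecTail] <;> (try field_simp) <;> (try ring)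
      have p2 : (!![-b/β, α/β, γ/β; 0, 1, 0; 0, 0, 1] : Matrix (Fin 3) (Fin 3) ℝ) *
          !![-β/b, α/b, γ/b; 0, 1, 0; 0, 0, 1] = 1 := by
        ext i j
        fin_cases i <;> fin_cases j <;>
          simp [Matrix.mul_apply, Fin.sum_univ_three, Matrix.one_apply, Matrix.vecHead, Matrix.vecTail] <;> (try field_simp) <;> (try ring)
      refine ⟨eqOf _ _ p1 p2, helper α β γ b hb _ ?_⟩
      intro z
      rw [eqOf_apply]
      simp [Matrix.mulVec, dotProduct, Fin.sum_univ_three]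
      ring
    · have hγ : γ ≠ 0 := by
        push_neg at hα hβ
        intro hg; exact h ⟨hα, hβ, hg⟩
      have p1 : (!![-β/b, α/b, γ/b; 1, 0, 0; 0, 1, 0] : Matrix (Fin 3) (Fin 3) ℝ) *
          !![0, 1, 0; 0, 0, 1; b/γ, β/γ, -α/γ] = 1 := by
        ext i j
        fin_cases i <;> fin_cases j <;>
          simp [Matrix.mul_apply, Fin.sum_univ_three, Matrix.one_apply, Matrix.vecHead, Matrix.vecTail] <;> (try field_simp) <;> (try ring)
      have p2 : (!![0, 1, 0; 0, 0, 1; b/γ, β/γ, -α/γ] : Matrix (Fin 3) (Fin 3) ℝ) *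
          !![-β/b, α/b, γ/b; 1, 0, 0; 0, 1, 0] = 1 := by
        ext i j
        fin_cases i <;> fin_cases j <;>
          simp [Matrix.mul_apply, Fin.sum_univ_three, Matrix.one_apply, Matrix.vecHead, Matrix.vecTail] <;> (try field_simp) <;> (try ring)
      refine ⟨eqOf _ _ p1 p2, helper α β γ b hb _ ?_⟩
      intro z
      rw [eqOf_apply]
      simp [Matrix.mulVec, dotProduct, Fin.sum_univ_three]
      ring
end

section
/- For α, β, γ ∈ R with α² + β² − γ² > 0, the Lie algebra with brackets [Y1,Y2] = −α Y1 + β Y2, [Y2,Y3] = γ Y2 + α Y3, [Y3,Y1] = −γ Y1 − β Y3 is isomorphic to the algebra with brackets [Z1,Z2] = −b Z2, [Z2,Z3] = 0, [Z3,Z1] = b Z3, where b = sqrt(α² + β² − γ²). -/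
open Module

variable {K V : Type*} [Field K] [AddCommGroup V] [Module K V]

theorem exists_linearEquiv_apply_eq_of_ne_zero {v w : V} (hv : v ≠ 0) (hw : w ≠ 0) :
    ∃ g : V ≃ₗ[K] V, g v = w := by
  let f := (LinearEquiv.coord K V v hv).trans
    (LinearEquiv.toSpanNonzeroSingleton K V w hw)
  obtain ⟨g, hg⟩ := Submodule.exists_linearEquiv_restrict_eq f
  refine ⟨g, ?_⟩
  simpa [f, LinearEquiv.coord_self] using (hg ⟨v, Submodule.mem_span_singleton_self v⟩).symm

theorem exists_linearEquiv_dual_comp_eq [FiniteDimensional K V] {φ ψ : Dual K V}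
    (hφ : φ ≠ 0) (hψ : ψ ≠ 0) : ∃ A : V ≃ₗ[K] V, ∀ x, ψ (A x) = φ x := by
  obtain ⟨g, hg⟩ := exists_linearEquiv_apply_eq_of_ne_zero (K := K) hψ hφ
  -- `A` is the transpose of `g`, read through `V ≃ V**`.
  refine ⟨(evalEquiv K V).trans (g.dualMap.trans (evalEquiv K V).symm), fun x => ?_⟩
  simp [hg]

def Module.Dual.bracket (φ : Dual K V) (x y : V) : V := φ x • y - φ y • x

theorem LinearEquiv.map_dual_bracket {W : Type*} [AddCommGroup W] [Module K W] (A : V ≃ₗ[K] W)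
    {φ : Dual K V} {ψ : Dual K W} (hA : ∀ x, ψ (A x) = φ x) (x y : V) :
    A (φ.bracket x y) = ψ.bracket (A x) (A y) := by
  simp only [Dual.bracket, map_sub, map_smul, hA]

theorem bracketOf_dualVIII_eq_bracket (α β γ : ℝ) (x y : Fin 3 → ℝ) :
    bracketOf ![-α, β, 0] ![0, γ, α] ![-γ, 0, -β] x y =
      (β • LinearMap.proj 0 + α • LinearMap.proj 1 - γ • LinearMap.proj 2 :
        Dual ℝ (Fin 3 → ℝ)).bracket x y := by
  funext i; fin_cases i <;> simp [bracketOf, Dual.bracket] <;> ring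

theorem bracketOf_scaled_proj_zero_eq_bracket (b : ℝ) (x y : Fin 3 → ℝ) :
    bracketOf ![0, -b, 0] ![0, 0, 0] ![0, 0, b] x y =
      ((-b) • LinearMap.proj 0 : Dual ℝ (Fin 3 → ℝ)).bracket x y := by
  funext i; fin_cases i <;> simp [bracketOf, Dual.bracket] <;> ring

/-- for `α² + β² - γ² > 0`, the algebra `[Y1,Y2] = -α Y1 + β Y2`,
`[Y2,Y3] = γ Y2 + α Y3`, `[Y3,Y1] = -γ Y1 - β Y3` is isomorphic to
`[Z1,Z2] = -b Z2, [Z2,Z3] = 0, [Z3,Z1] = b Z3` with `b = √(α² + β² - γ²)`. -/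
theorem dual_VIII_iso_pos (α β γ : ℝ) (h : 0 < α ^ 2 + β ^ 2 - γ ^ 2) :
    ∃ A : (Fin 3 → ℝ) ≃ₗ[ℝ] (Fin 3 → ℝ),
      ∀ x y, A (bracketOf ![-α, β, 0] ![0, γ, α] ![-γ, 0, -β] x y) =
        bracketOf ![0, -Real.sqrt (α ^ 2 + β ^ 2 - γ ^ 2), 0] ![0, 0, 0]
          ![0, 0, Real.sqrt (α ^ 2 + β ^ 2 - γ ^ 2)] (A x) (A y) := by
  set b := Real.sqrt (α ^ 2 + β ^ 2 - γ ^ 2)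
  have hb : 0 < b := Real.sqrt_pos.mpr h
  have hφ : (β • LinearMap.proj 0 + α • LinearMap.proj 1 - γ • LinearMap.proj 2 :
      Dual ℝ (Fin 3 → ℝ)) ≠ 0 := by
    intro h0
    have hβ : β = 0 := by simpa using LinearMap.congr_fun h0 (Pi.single 0 1)
    have hα : α = 0 := by simpa using LinearMap.congr_fun h0 (Pi.single 1 1)
    subst hα hβ
    nlinarith [sq_nonneg γ]
  have hψ : ((-b) • LinearMap.proj 0 : Dual ℝ (Fin 3 → ℝ)) ≠ 0 := by
    intro h0
    have : -b = 0 := by simpa using LinearMap.congr_fun h0 (Pi.single 0 1)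
    linarith
  obtain ⟨A, hA⟩ := exists_linearEquiv_dual_comp_eq hφ hψ
  refine ⟨A, fun x y => ?_⟩
  rw [bracketOf_dualVIII_eq_bracket, bracketOf_scaled_proj_zero_eq_bracket, A.map_dual_bracket hA]
end

section
/- For α, β, γ ∈ R with α² + β² − γ² = 0 and (α,β,γ) ≠ (0,0,0), the Lie algebra with brackets [Y1,Y2] = −α Y1 + β Y2, [Y2,Y3] = γ Y2 + α Y3, [Y3,Y1] = −γ Y1 − β Y3 is isomorphic to the Lie algebra with brackets [Z1,Z2] = Z2, [Z2,Z3] = Z2, [Z3,Z1] = −(Z1 + Z3). -/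
/-- for `α² + β² - γ² = 0`, `(α,β,γ) ≠ 0`, the algebra
`[Y1,Y2] = -α Y1 + β Y2`, `[Y2,Y3] = γ Y2 + α Y3`, `[Y3,Y1] = -γ Y1 - β Y3`
is isomorphic to `[Z1,Z2] = Z2, [Z2,Z3] = Z2, [Z3,Z1] = -(Z1 + Z3)`. -/
theorem dual_VIII_iso_null (α β γ : ℝ) (h0 : α ^ 2 + β ^ 2 - γ ^ 2 = 0)
    (hne : (α, β, γ) ≠ (0, 0, 0)) :
    ∃ A : (Fin 3 → ℝ) ≃ₗ[ℝ] (Fin 3 → ℝ),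
      ∀ x y, A (bracketOf ![-α, β, 0] ![0, γ, α] ![-γ, 0, -β] x y) =
        bracketOf ![0, 1, 0] ![0, 1, 0] ![-1, 0, -1] (A x) (A y) := by
  have hγ : γ ≠ 0 := by
    rintro rfl
    have hα : α = 0 := by nlinarith [sq_nonneg α, sq_nonneg β]
    have hβ : β = 0 := by nlinarith [sq_nonneg α, sq_nonneg β]
    exact hne (by simp [hα, hβ])
  set MA : Matrix (Fin 3) (Fin 3) ℝ :=
    !![β - 1/γ, α, -γ; 0, 1/γ, 0; -1/γ, 0, 0] with hMA
  set MB : Matrix (Fin 3) (Fin 3) ℝ :=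
    !![0, 0, -γ; 0, γ, 0; -1/γ, α, -β + 1/γ] with hMB
  have hAB : MA * MB = 1 := by
    ext i j
    fin_cases i <;> fin_cases j <;>
      · try simp [hMA, hMB, Matrix.mul_apply, Fin.sum_univ_three, Matrix.one_apply,
          Matrix.vecHead, Matrix.vecTail]
        try field_simp
        try ring
  have hBA : MB * MA = 1 := by
    ext i j
    fin_cases i <;> fin_cases j <;>
      · try simp [hMA, hMB, Matrix.mul_apply, Fin.sum_univ_three, Matrix.one_apply,
          Matrix.vecHead, Matrix.vecTail]
        try field_simp
        try ring
  refine ⟨LinearEquiv.ofLinear (Matrix.toLin' MA) (Matrix.toLin' MB) ?_ ?_, ?_⟩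
  · rw [← Matrix.toLin'_mul, hAB, Matrix.toLin'_one]
  · rw [← Matrix.toLin'_mul, hBA, Matrix.toLin'_one]
  · intro x y
    funext i
    fin_cases i <;>
      · try simp [bracketOf, hMA, Matrix.toLin'_apply, Matrix.mulVec, dotProduct,
          Fin.sum_univ_three, Matrix.vecHead, Matrix.vecTail]
        try field_simp
        try ring
end

section
/- For any real numbers α, β, γ, δ, ε, ζ, the bracket [Y1,Y2] = α Y1 + β Y2 + γ Y3, [Y2,Y3] = δ Y1 − ε Y2 + α Y3, [Y3,Y1] = −ε Y1 − ζ Y2 + β Y3 satisfies the Jacobi identity, hence defines a 3-dimensional real Lie algebra. -/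
/-- for all α β γ δ ε ζ, the bracket `[Y1,Y2] = α Y1 + β Y2 + γ Y3`,
`[Y2,Y3] = δ Y1 - ε Y2 + α Y3`, `[Y3,Y1] = -ε Y1 - ζ Y2 + β Y3` satisfies the
Jacobi identity, hence defines a 3-dimensional real Lie algebra. -/
theorem dual_V_jacobi (α β γ δ ε ζ : ℝ) :
    IsJacobi (bracketOf ![α, β, γ] ![δ, -ε, α] ![-ε, -ζ, β]) := by
  intro x y z
  funext i
  simp only [bracketOf, IsJacobi, Pi.add_apply, Pi.smul_apply, Pi.zero_apply, smul_eq_mul]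
  fin_cases i <;>
    simp [Matrix.cons_val_zero, Matrix.cons_val_one, Matrix.head_cons] <;> ring
end

section
/- The two 3-dimensional Lie algebras with brackets (i) [Y1,Y2] = −b Y2, [Y2,Y3] = 0, [Y3,Y1] = b Y3 (b > 0) and (ii) [Z1,Z2] = 0, [Z2,Z3] = b Z2, [Z3,Z1] = −b Z1 (b > 0) are isomorphic as Lie algebras (both are Bianchi type V up to scale), but there is no isomorphism between them given by a transformation Y_i' = Y_k A^k_i whose inverse-transpose fixes the standard sl(2,R) structure constants f_{12}^3 = −1, f_{23}^1 = 1, f_{31}^2 = 1. -/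
/-- Structure constants of `sl(2,ℝ)`: `[X1,X2] = -X3, [X2,X3] = X1, [X3,X1] = X2`. -/
def fVIII : Fin 3 → Fin 3 → Fin 3 → ℝ :=
  ![![![0, 0, 0], ![0, 0, -1], ![0, -1, 0]],
    ![![0, 0, 1], ![0, 0, 0], ![1, 0, 0]],
    ![![0, 1, 0], ![-1, 0, 0], ![0, 0, 0]]]

/-- Structure constants of `[Y1,Y2] = -b Y2, [Y2,Y3] = 0, [Y3,Y1] = b Y3`. -/
def ftA (b : ℝ) : Fin 3 → Fin 3 → Fin 3 → ℝ :=
  ![![![0, 0, 0], ![0, -b, 0], ![0, 0, -b]],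
    ![![0, b, 0], ![0, 0, 0], ![0, 0, 0]],
    ![![0, 0, b], ![0, 0, 0], ![0, 0, 0]]]

/-- Structure constants of `[Z1,Z2] = 0, [Z2,Z3] = b Z2, [Z3,Z1] = -b Z1`. -/
def ftB (b : ℝ) : Fin 3 → Fin 3 → Fin 3 → ℝ :=
  ![![![0, 0, 0], ![0, 0, 0], ![b, 0, 0]],
    ![![0, 0, 0], ![0, 0, 0], ![0, b, 0]],
    ![![-b, 0, 0], ![0, -b, 0], ![0, 0, 0]]]

/-- The cyclic coordinate rotation as a linear equivalence of `ℝ³`. -/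
noncomputable def rotEquiv : (Fin 3 → ℝ) ≃ₗ[ℝ] (Fin 3 → ℝ) where
  toFun v := ![v 1, v 2, v 0]
  invFun v := ![v 2, v 0, v 1]
  map_add' x y := by funext i; fin_cases i <;> simp
  map_smul' c x := by funext i; fin_cases i <;> simp
  left_inv x := by funext i; fin_cases i <;> simp
  right_inv x := by funext i; fin_cases i <;> simp

/-- the two algebras are isomorphic as Lie algebras, but there is no
basis change `X_i' = X_k A^k_i` preserving the `sl(2,ℝ)` structure constants whose
dual transformation maps the structure constants of the first onto the second. -/
theorem manin_triples_VIII_inequivalent (b : ℝ) (hb : 0 < b) :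
    (∃ A : (Fin 3 → ℝ) ≃ₗ[ℝ] (Fin 3 → ℝ),
      ∀ x y, A (bracketOf ![0, -b, 0] ![0, 0, 0] ![0, 0, b] x y) =
        bracketOf ![0, 0, 0] ![0, b, 0] ![-b, 0, 0] (A x) (A y)) ∧
    ¬ ∃ A : Matrix (Fin 3) (Fin 3) ℝ, IsUnit A.det ∧
      (∀ i j m, (∑ k, ∑ l, A k i * A l j * fVIII k l m) = ∑ p, fVIII i j p * A m p) ∧
      (∀ i j m, (∑ k, ∑ l, A⁻¹ i k * A⁻¹ j l * ftA b k l m) = ∑ p, ftB b i j p * A⁻¹ p m) := by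
  constructor
  · refine ⟨rotEquiv, fun x y => ?_⟩
    funext i
    fin_cases i <;>
      simp [rotEquiv, bracketOf]
  · rintro ⟨A, hdet, h2, h3⟩
    -- dual condition gives (A⁻¹) 0 0 = 0 and (A⁻¹) 1 0 = 0
    have e1 := h3 0 2 0
    have e2 := h3 1 2 0
    simp [Fin.sum_univ_three, ftA, ftB] at e1 e2
    have hb00 : A⁻¹ 0 0 = 0 := e1.resolve_left hb.ne'
    have hb10 : A⁻¹ 1 0 = 0 := e2.resolve_left hb.ne'
    -- A * A⁻¹ = 1, column 0
    have hAB := Matrix.mul_nonsing_inv A hdet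
    have g0 := congrFun (congrFun hAB 0) 0
    have g1 := congrFun (congrFun hAB 1) 0
    have g2 := congrFun (congrFun hAB 2) 0
    simp [Matrix.mul_apply, Fin.sum_univ_three, Matrix.one_apply, hb00, hb10] at g0 g1 g2
    -- so A 0 2 * c = 1, A 1 2 * c = 0, A 2 2 * c = 0 with c = A⁻¹ 2 0 ≠ 0
    have hc : A⁻¹ 2 0 ≠ 0 := by
      intro h; rw [h, mul_zero] at g0; exact one_ne_zero g0.symm
    have ha12 : A 1 2 = 0 := g1.resolve_right hc
    have ha22 : A 2 2 = 0 := g2.resolve_right hc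
    -- sl(2) automorphism conditions
    have f121 := h2 1 2 1
    have f122 := h2 1 2 2
    have f200 := h2 2 0 0
    have f201 := h2 2 0 1
    have f202 := h2 2 0 2
    simp [Fin.sum_univ_three, fVIII, ha12, ha22] at f121 f122 f200 f201 f202
    -- f121 : A 2 1 * A 0 2 = A 1 0   (up to arrangement)
    -- f122 : A 1 1 * A 0 2 = A 2 0
    -- f200 : A 0 1 = 0
    -- f201 : -(A 0 2 * A 2 0) = A 1 1
    -- f202 : -(A 0 2 * A 1 0) = A 2 1
    have key20 : A 2 0 * (1 + A 0 2 ^ 2) = 0 := by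
      linear_combination (-1 : ℝ) * f122 - A 0 2 * f201
    have key10 : A 1 0 * (1 + A 0 2 ^ 2) = 0 := by
      linear_combination (-1 : ℝ) * f121 - A 0 2 * f202
    have hpos : (1 + A 0 2 ^ 2) ≠ 0 := by positivity
    have ha20 : A 2 0 = 0 := (mul_eq_zero.mp key20).resolve_right hpos
    have ha10 : A 1 0 = 0 := (mul_eq_zero.mp key10).resolve_right hpos
    have ha11 : A 1 1 = 0 := by rw [← f201, ha20]; ring
    have ha21 : A 2 1 = 0 := by rw [← f202, ha10]; ring
    have ha01 : A 0 1 = 0 := f200.symm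
    have : A.det = 0 := by
      rw [Matrix.det_fin_three, ha01, ha11, ha21, ha12, ha22]
      ring
    rw [this] at hdet
    exact hdet.ne_zero rfl
end

section
/- For a > 0, a ≠ 1, the 3-dimensional Lie algebra with brackets [Y1,Y2] = Y1, [Y2,Y3] = ((a+1)/(a−1))(Y2 + Y3), [Y3,Y1] = Y1 is isomorphic to the Bianchi VI_{1/a} algebra with brackets [Z1,Z2] = −(1/a) Z2 − Z3, [Z2,Z3] = 0, [Z3,Z1] = Z2 + (1/a) Z3. -/
/-- for `a > 0`, `a ≠ 1`, the algebra
`[Y1,Y2] = Y1, [Y2,Y3] = ((a+1)/(a-1))(Y2 + Y3), [Y3,Y1] = Y1` is isomorphic to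
Bianchi VI_{1/a}: `[Z1,Z2] = -(1/a) Z2 - Z3, [Z2,Z3] = 0, [Z3,Z1] = Z2 + (1/a) Z3. -/
theorem dual_VIa_iso (a : ℝ) (ha : 0 < a) (ha1 : a ≠ 1) :
    ∃ A : (Fin 3 → ℝ) ≃ₗ[ℝ] (Fin 3 → ℝ),
      ∀ x y, A (bracketOf ![1, 0, 0] ![0, (a + 1) / (a - 1), (a + 1) / (a - 1)]
          ![1, 0, 0] x y) =
        bracketOf ![0, -(1 / a), -1] ![0, 0, 0] ![0, 1, 1 / a] (A x) (A y) := by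
  have ha0 : a ≠ 0 := ne_of_gt ha
  have hsub : a - 1 ≠ 0 := sub_ne_zero.mpr ha1
  have h1a : (1 : ℝ) - a ≠ 0 := sub_ne_zero.mpr (Ne.symm ha1)
  refine ⟨{ toFun := fun x => ![a / (1 - a) * (x 1 - x 2), x 0 + x 2, -x 0 + x 2],
            invFun := fun y => ![(y 1 - y 2) / 2,
              (1 - a) / a * y 0 + (y 1 + y 2) / 2, (y 1 + y 2) / 2],
            map_add' := ?_, map_smul' := ?_, left_inv := ?_, right_inv := ?_ }, ?_⟩
  · intro x y
    funext i
    fin_cases i <;> simp <;> ring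
  · intro c x
    funext i
    fin_cases i <;> simp <;> ring
  · intro x
    funext i
    fin_cases i <;> simp <;> field_simp <;> ring
  · intro y
    funext i
    fin_cases i <;> simp <;> field_simp <;> ring
  · intro x y
    funext i
    fin_cases i <;>
      simp [bracketOf, Matrix.cons_val_zero, Matrix.cons_val_one] <;>
      field_simp <;> ring
end
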